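/- arXiv:2203.01631 — 5 statements merged into one kernel-verified Lean document; each statement's English description precedes it below -/
import Mathlib

section
/- Let m ≥ 1, let f be a Schwartz function on ℝ^m and ρ a Schwartz function on ℝ. Then for every a ∈ ℝ^m and ω ∈ ℝ, the Fourier transform in the bias variable of the ridgelet transform factorizes as ∫_ℝ R[f;ρ](a,b) e^{−iωb} db = f̂(ωa)·conj(ρ^♯(ω)), where f̂(ξ) := ∫_{ℝ^m} f(x) e^{−i x·ξ} dx and ρ^♯(ω) := ∫_ℝ ρ(b) e^{−iωb} db. -/
/-!
Both sides are the double integral of `f x · conj ρ(a·x − b) · e^{−iωb}` over `ℝ^m × ℝ`, which is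
absolutely convergent: the shear `(x, b) ↦ (x, a·x − b)` preserves Lebesgue measure and turns its
modulus into `|f(x)| |ρ(t)|`. Integrating first in `b` and substituting `t = a·x − b` splits
`e^{−iωb} = e^{−iω a·x} e^{iωt}`, and `∫ conj ρ(t) e^{iωt} dt = conj ρ^♯(ω)`.
-/

open MeasureTheory Complex
open scoped RealInnerProductSpace

/-- Fourier transform in the bias variable: `φ^♯(ω) = ∫ φ(b) e^{-iωb} db`. -/
noncomputable def biasFourier (φ : ℝ → ℂ) (ω : ℝ) : ℂ :=
  ∫ b : ℝ, φ b * Complex.exp (-Complex.I * ω * b)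

/-- The ridgelet transform `R[f;ρ](a,b) = ∫ f(x) conj(ρ(a·x - b)) dx`. -/
noncomputable def ridgelet (m : ℕ) (f : EuclideanSpace ℝ (Fin m) → ℂ) (ρ : ℝ → ℂ)
    (a : EuclideanSpace ℝ (Fin m)) (b : ℝ) : ℂ :=
  ∫ x : EuclideanSpace ℝ (Fin m), f x * starRingEnd ℂ (ρ (⟪a, x⟫ - b))

open ComplexConjugate

lemma integral_conj_comp_sub_mul_exp (ρ : ℝ → ℂ) (c ω : ℝ) :
    ∫ b : ℝ, conj (ρ (c - b)) * exp (-I * ω * b) = exp (-I * ω * c) * conj (biasFourier ρ ω) := by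
  have hsplit : ∀ t : ℝ, conj (ρ t) * exp (-I * ω * ↑(c - t))
      = exp (-I * ω * c) * conj (ρ t * exp (-I * ω * t)) := by
    intro t
    rw [map_mul, ← exp_conj, mul_left_comm, ← exp_add]
    congr 2
    simp only [map_mul, map_neg, conj_I, conj_ofReal]
    push_cast
    ring
  calc ∫ b : ℝ, conj (ρ (c - b)) * exp (-I * ω * b)
      = ∫ t : ℝ, conj (ρ t) * exp (-I * ω * ↑(c - t)) := by
        simpa using integral_sub_left_eq_self (fun t : ℝ => conj (ρ t) * exp (-I * ω * ↑(c - t)))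
          volume c
    _ = exp (-I * ω * c) * conj (biasFourier ρ ω) := by
        simp_rw [hsplit]
        rw [integral_const_mul, integral_conj, biasFourier]

section

variable {α : Type*} [MeasurableSpace α] {μ : Measure α} [SFinite μ] {ℓ : α → ℝ}

lemma measurePreserving_prod_sub_left (hℓ : Measurable ℓ) :
    MeasurePreserving (fun p : α × ℝ => (p.1, ℓ p.1 - p.2)) (μ.prod volume) (μ.prod volume) :=
  (MeasurePreserving.id μ).skew_product (by fun_prop)
    (ae_of_all _ fun x => (volume.measurePreserving_sub_left (ℓ x)).map_eq)

lemma integrable_mul_conj_comp_sub_mul_exp {f : α → ℂ} {ρ : ℝ → ℂ} (hf : Integrable f μ)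
    (hρ : Integrable ρ) (hℓ : Measurable ℓ) (ω : ℝ) :
    Integrable (fun p : α × ℝ => f p.1 * conj (ρ (ℓ p.1 - p.2)) * exp (-I * ω * p.2))
      (μ.prod volume) := by
  have hsheared : Integrable (fun p : α × ℝ => f p.1 * conj (ρ (ℓ p.1 - p.2))) (μ.prod volume) :=
    (measurePreserving_prod_sub_left hℓ).integrable_comp_of_integrable
      (hf.mul_prod (conjCLE.toContinuousLinearMap.integrable_comp hρ))
  exact hsheared.mul_bdd (c := 1) (by fun_prop) (ae_of_all _ fun p => by simp [norm_exp])

theorem integral_integral_mul_conj_comp_sub_mul_exp {f : α → ℂ} {ρ : ℝ → ℂ}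
    (hf : Integrable f μ) (hρ : Integrable ρ) (hℓ : Measurable ℓ) (ω : ℝ) :
    ∫ b : ℝ, (∫ x, f x * conj (ρ (ℓ x - b)) ∂μ) * exp (-I * ω * b)
      = (∫ x, f x * exp (-I * ω * ℓ x) ∂μ) * conj (biasFourier ρ ω) := by
  calc ∫ b : ℝ, (∫ x, f x * conj (ρ (ℓ x - b)) ∂μ) * exp (-I * ω * b)
      = ∫ b : ℝ, ∫ x, f x * conj (ρ (ℓ x - b)) * exp (-I * ω * b) ∂μ := by
        simp_rw [integral_mul_const]
    _ = ∫ x, (∫ b : ℝ, f x * conj (ρ (ℓ x - b)) * exp (-I * ω * b)) ∂μ :=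
        (integral_integral_swap (integrable_mul_conj_comp_sub_mul_exp hf hρ hℓ ω)).symm
    _ = ∫ x, f x * exp (-I * ω * ℓ x) * conj (biasFourier ρ ω) ∂μ := by
        congr 1 with x
        simp_rw [mul_assoc (f x)]
        rw [integral_const_mul, integral_conj_comp_sub_mul_exp]
    _ = (∫ x, f x * exp (-I * ω * ℓ x) ∂μ) * conj (biasFourier ρ ω) := integral_mul_const _ _

end

theorem ridgelet_biasFourier_factorizes_general (m : ℕ)
    (f : SchwartzMap (EuclideanSpace ℝ (Fin m)) ℂ) (ρ : SchwartzMap ℝ ℂ)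
    (a : EuclideanSpace ℝ (Fin m)) (ω : ℝ) :
    ∫ b : ℝ, ridgelet m f ρ a b * Complex.exp (-Complex.I * ω * b)
      = (∫ x : EuclideanSpace ℝ (Fin m),
            f x * Complex.exp (-Complex.I * ⟪x, ω • a⟫))
        * starRingEnd ℂ (biasFourier ρ ω) := by
  have hphase : ∀ x : EuclideanSpace ℝ (Fin m), (⟪x, ω • a⟫ : ℂ) = ω * ⟪a, x⟫ := fun x => by
    rw [real_inner_smul_right, real_inner_comm, ofReal_mul]
  simp_rw [hphase, ← mul_assoc]
  exact integral_integral_mul_conj_comp_sub_mul_exp f.integrable ρ.integrable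
    (measurable_const.inner measurable_id) ω

theorem ridgelet_biasFourier_factorizes (m : ℕ) (hm : 1 ≤ m)
    (f : SchwartzMap (EuclideanSpace ℝ (Fin m)) ℂ) (ρ : SchwartzMap ℝ ℂ)
    (a : EuclideanSpace ℝ (Fin m)) (ω : ℝ) :
    ∫ b : ℝ, ridgelet m f ρ a b * Complex.exp (-Complex.I * ω * b)
      = (∫ x : EuclideanSpace ℝ (Fin m),
            f x * Complex.exp (-Complex.I * ⟪x, ω • a⟫))
        * starRingEnd ℂ (biasFourier ρ ω) :=
  ridgelet_biasFourier_factorizes_general m f ρ a ω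
end

section
/- Let m ≥ 1, let γ be a Schwartz function on ℝ^m × ℝ and σ a Schwartz function on ℝ. Then for every x ∈ ℝ^m, the integral representation S[γ](x) := ∫_{ℝ^m×ℝ} γ(a,b)·σ(a·x − b) da db admits the Fourier expression S[γ](x) = (2π)^{−1} ∫_{ℝ^m×ℝ} γ^♯(a,ω)·σ^♯(ω)·e^{iω a·x} da dω, where both integrals converge absolutely. -/
open MeasureTheory Complex
open scoped RealInnerProductSpace

/-- Fourier transform of `γ(a,b)` in the bias variable `b`. -/
noncomputable def gammaSharp (m : ℕ) (γ : EuclideanSpace ℝ (Fin m) × ℝ → ℂ)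
    (a : EuclideanSpace ℝ (Fin m)) (ω : ℝ) : ℂ :=
  ∫ b : ℝ, γ (a, b) * Complex.exp (-Complex.I * ω * b)

/-!
In the normalisation of `biasFourier`, Fourier inversion for `σ` reads
`∫ σ^♯(ω) e^{iωs} dω = 2π σ(s)`. Inserting this for `σ(a·x - b)` and exchanging the `ω`- and
`b`-integrals turns `∫ γ(a,b) σ(a·x - b) db` into `(2π)⁻¹ ∫ γ^♯(a,ω) σ^♯(ω) e^{iω a·x} dω` for
every slice `a` along which `γ` is integrable; Fubini over `(a,b)` and over `(a,ω)` assembles the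
slices. Every exchange is licensed because the phases are unimodular, so the integrands are
dominated by products of `|γ|`-slices and `|σ^♯|`.
-/

open scoped FourierTransform Real

lemma norm_cexp_I_mul_ofReal_mul_ofReal (ω t : ℝ) : ‖cexp (I * ω * t)‖ = 1 := by
  rw [show I * ω * t = ((ω * t : ℝ) : ℂ) * I by push_cast; ring]
  exact norm_exp_ofReal_mul_I _

lemma biasFourier_eq_fourier (φ : ℝ → ℂ) (ω : ℝ) :
    biasFourier φ ω = 𝓕 φ (ω / (2 * π)) := by
  rw [Real.fourier_eq', biasFourier]
  congr 1 with b
  rw [smul_eq_mul, mul_comm, RCLike.inner_apply, conj_trivial]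
  congr 2
  push_cast
  field_simp

lemma integrable_biasFourier {φ : ℝ → ℂ} (hφ : Integrable (𝓕 φ)) :
    Integrable (biasFourier φ) := by
  simp_rw [funext (biasFourier_eq_fourier φ), div_eq_inv_mul]
  exact hφ.comp_mul_left' (by positivity)

lemma integral_biasFourier_mul_cexp {φ : ℝ → ℂ} (hc : Continuous φ) (hi : Integrable φ)
    (hF : Integrable (𝓕 φ)) (s : ℝ) :
    ∫ ω, biasFourier φ ω * cexp (I * ω * s) = 2 * π * φ s := by
  have hrescale : ∀ ω : ℝ, biasFourier φ ω * cexp (I * ω * s)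
      = cexp (↑(2 * π * ⟪ω / (2 * π), s⟫) * I) • 𝓕 φ (ω / (2 * π)) := by
    intro ω
    rw [biasFourier_eq_fourier, smul_eq_mul, mul_comm, RCLike.inner_apply, conj_trivial]
    congr 2
    push_cast
    field_simp
  simp_rw [hrescale]
  rw [Measure.integral_comp_div (fun ξ => cexp (↑(2 * π * ⟪ξ, s⟫) * I) • 𝓕 φ ξ),
    ← Real.fourierInv_eq', hc.fourierInv_fourier_eq hi hF, abs_of_pos (by positivity), real_smul]
  push_cast
  ring

lemma integral_mul_comp_sub_eq_integral_biasFourier {f φ : ℝ → ℂ} (hf : Integrable f)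
    (hc : Continuous φ) (hi : Integrable φ) (hF : Integrable (𝓕 φ)) (t : ℝ) :
    ∫ b, f b * φ (t - b)
      = (2 * (π : ℂ))⁻¹ * ∫ ω, biasFourier f ω * biasFourier φ ω * cexp (I * ω * t) := by
  set K : ℝ → ℝ → ℂ := fun ω b => biasFourier φ ω * f b * cexp (I * ω * ↑(t - b))
  have hK : Integrable (Function.uncurry K) (volume.prod volume) :=
    ((integrable_biasFourier hF).mul_prod hf).mul_bdd
      (Continuous.aestronglyMeasurable (f := fun z : ℝ × ℝ => cexp (I * z.1 * ↑(t - z.2)))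
        (by fun_prop))
      (ae_of_all _ fun z => (norm_cexp_I_mul_ofReal_mul_ofReal z.1 (t - z.2)).le)
  have hsplit : ∀ ω : ℝ,
      biasFourier f ω * biasFourier φ ω * cexp (I * ω * t) = ∫ b, K ω b := by
    intro ω
    rw [biasFourier, ← integral_mul_const, ← integral_mul_const]
    congr 1 with b
    simp only [K]
    rw [show (I * ω * ↑(t - b) : ℂ) = -I * ω * b + I * ω * t by push_cast; ring, Complex.exp_add]
    ring
  have hinv : ∀ b : ℝ, ∫ ω, K ω b = 2 * π * (f b * φ (t - b)) := by
    intro b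
    simp only [K, mul_right_comm _ (f b), integral_mul_const,
      integral_biasFourier_mul_cexp hc hi hF]
    ring
  simp_rw [hsplit]
  rw [integral_integral_swap hK]
  simp_rw [hinv]
  rw [integral_const_mul, inv_mul_cancel_left₀ (by simp [Real.pi_ne_zero])]

lemma integrable_biasFourier_slice_mul {α : Type*} [TopologicalSpace α]
    [SecondCountableTopology α] [MeasurableSpace α] [BorelSpace α] {μ : Measure α} [SFinite μ]
    {f : α × ℝ → ℂ} (hc : Continuous f) (hf : Integrable f (μ.prod volume))
    {ψ : ℝ → ℂ} (hψ : Integrable ψ) :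
    Integrable (fun p : α × ℝ => biasFourier (fun b => f (p.1, b)) p.2 * ψ p.2)
      (μ.prod volume) := by
  have hmeas : StronglyMeasurable fun p : α × ℝ => biasFourier (fun b => f (p.1, b)) p.2 :=
    (Continuous.stronglyMeasurable
      (f := fun q : (α × ℝ) × ℝ => f (q.1.1, q.2) * cexp (-I * q.1.2 * q.2))
      (by fun_prop)).integral_prod_right'
  refine (hf.integral_norm_prod_left.mul_prod hψ.norm).mono'
    (hmeas.aestronglyMeasurable.mul hψ.aestronglyMeasurable.comp_snd) (ae_of_all _ fun p => ?_)
  rw [norm_mul]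
  gcongr
  refine (norm_integral_le_integral_norm _).trans_eq (integral_congr_ae (ae_of_all _ fun b => ?_))
  dsimp only
  rw [norm_mul, show -I * p.2 * b = I * ↑(-p.2) * b by push_cast; ring,
    norm_cexp_I_mul_ofReal_mul_ofReal, mul_one]

theorem integral_representation_fourier_expression_general (m : ℕ)
    (γ : SchwartzMap (EuclideanSpace ℝ (Fin m) × ℝ) ℂ) (σ : SchwartzMap ℝ ℂ)
    (x : EuclideanSpace ℝ (Fin m)) :
    Integrable (fun p : EuclideanSpace ℝ (Fin m) × ℝ => γ p * σ (⟪p.1, x⟫ - p.2)) ∧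
    Integrable (fun p : EuclideanSpace ℝ (Fin m) × ℝ =>
        gammaSharp m γ p.1 p.2 * biasFourier σ p.2 * Complex.exp (Complex.I * p.2 * ⟪p.1, x⟫)) ∧
    (∫ p : EuclideanSpace ℝ (Fin m) × ℝ, γ p * σ (⟪p.1, x⟫ - p.2))
      = (2 * (Real.pi : ℂ))⁻¹
          * ∫ p : EuclideanSpace ℝ (Fin m) × ℝ,
              gammaSharp m γ p.1 p.2 * biasFourier σ p.2
                * Complex.exp (Complex.I * p.2 * ⟪p.1, x⟫) := by
  rw [Measure.volume_eq_prod]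
  have hσF : Integrable (𝓕 ⇑σ) := (𝓕 σ).integrable
  have hγ : Integrable γ (volume.prod volume) := γ.integrable
  have hI1 : Integrable (fun p : EuclideanSpace ℝ (Fin m) × ℝ => γ p * σ (⟪p.1, x⟫ - p.2))
      (volume.prod volume) :=
    hγ.mul_bdd (Continuous.aestronglyMeasurable (by fun_prop))
      (ae_of_all _ fun p => σ.toBoundedContinuousFunction.norm_coe_le_norm _)
  have hI2 : Integrable (fun p : EuclideanSpace ℝ (Fin m) × ℝ =>
      gammaSharp m γ p.1 p.2 * biasFourier σ p.2 * cexp (I * p.2 * ⟪p.1, x⟫))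
      (volume.prod volume) :=
    (integrable_biasFourier_slice_mul γ.continuous hγ (integrable_biasFourier hσF)).mul_bdd
      (Continuous.aestronglyMeasurable (by fun_prop))
      (ae_of_all _ fun p => (norm_cexp_I_mul_ofReal_mul_ofReal p.2 ⟪p.1, x⟫).le)
  refine ⟨hI1, hI2, ?_⟩
  rw [integral_prod _ hI1, integral_prod _ hI2, ← integral_const_mul]
  refine integral_congr_ae ?_
  filter_upwards [hγ.prod_right_ae] with a ha
  exact integral_mul_comp_sub_eq_integral_biasFourier ha σ.continuous σ.integrable hσF _

theorem integral_representation_fourier_expression (m : ℕ) (hm : 1 ≤ m)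
    (γ : SchwartzMap (EuclideanSpace ℝ (Fin m) × ℝ) ℂ) (σ : SchwartzMap ℝ ℂ)
    (x : EuclideanSpace ℝ (Fin m)) :
    Integrable (fun p : EuclideanSpace ℝ (Fin m) × ℝ => γ p * σ (⟪p.1, x⟫ - p.2)) ∧
    Integrable (fun p : EuclideanSpace ℝ (Fin m) × ℝ =>
        gammaSharp m γ p.1 p.2 * biasFourier σ p.2 * Complex.exp (Complex.I * p.2 * ⟪p.1, x⟫)) ∧
    (∫ p : EuclideanSpace ℝ (Fin m) × ℝ, γ p * σ (⟪p.1, x⟫ - p.2))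
      = (2 * (Real.pi : ℂ))⁻¹
          * ∫ p : EuclideanSpace ℝ (Fin m) × ℝ,
              gammaSharp m γ p.1 p.2 * biasFourier σ p.2
                * Complex.exp (Complex.I * p.2 * ⟪p.1, x⟫) :=
  integral_representation_fourier_expression_general m γ σ x
end

section
/- (cc-universality on Euclidean space.) Let σ : ℝ → ℝ be continuous and suppose there exist an integer k ≥ 0 and θ > 0 such that the k-th forward difference Δ_θ^k[σ] is bounded, Lipschitz continuous, and not a constant function. Then for every m ≥ 1, every compact set Z ⊂ ℝ^m, every continuous function f : Z → ℝ, and every ε > 0, there exist n ∈ ℕ and parameters c_i ∈ ℝ, a_i ∈ ℝ^m, b_i ∈ ℝ (1 ≤ i ≤ n) such that sup_{x ∈ Z} | f(x) − Σ_{i=1}^n c_i σ(a_i·x − b_i) | < ε. -/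
/-!
Smooth out `g = Δ_θ^k[σ]` by convolving with a bump `ψ`: since `g * ψ` is a Bochner integral of
translates of `g` in `C(X, ℝ)`, every `x ↦ (g * ψ)(l φ(x) - b)` stays in the closed span of the
neurons. Differentiating in the scale `l` at `l = 0` then produces `φ^n · (g * ψ)^(n)(-b)`, and
`(g * ψ)^(n)` cannot vanish identically because `g * ψ` is bounded and non-constant. So all powers
of `φ = ⟪a, ·⟫`, hence (Weierstrass) `exp ⟪a, ·⟫`, lie in the closed span, and Stone–Weierstrass
for the exponentials finishes the proof.
-/

open scoped RealInnerProductSpace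

/-- Forward difference operator with step `θ`: `Δ_θ^0[σ] = σ` and
`Δ_θ^{n+1}[σ](t) = Δ_θ^n[σ](t+θ) − Δ_θ^n[σ](t)`. -/
def fwdDiffIter (θ : ℝ) : ℕ → (ℝ → ℝ) → (ℝ → ℝ)
  | 0, σ => σ
  | n + 1, σ => fun t => fwdDiffIter θ n σ (t + θ) - fwdDiffIter θ n σ t

open scoped NNReal Topology Convolution ContDiff
open MeasureTheory Set Filter
open ContinuousLinearMap (lsmul)

theorem Submodule.integral_mem_of_isClosed {α E : Type*} [MeasurableSpace α] {μ : Measure α}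
    [NormedAddCommGroup E] [NormedSpace ℝ E] [CompleteSpace E] {W : Submodule ℝ E}
    (hW : IsClosed (W : Set E)) {F : α → E} (hF : ∀ x, F x ∈ W) : ∫ x, F x ∂μ ∈ W := by
  have := hW.completeSpace_coe
  rw [show F = fun x => W.subtypeₗᵢ ⟨F x, hF x⟩ from rfl,
    W.subtypeₗᵢ.integral_comp_comm (fun x => (⟨F x, hF x⟩ : W))]
  exact Subtype.prop _

theorem Submodule.mem_of_hasDerivAt {E : Type*} [NormedAddCommGroup E] [NormedSpace ℝ E]
    {W : Submodule ℝ E} (hW : IsClosed (W : Set E)) {A : ℝ → E} {B : E} {l : ℝ}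
    (hA : ∀ l', A l' ∈ W) (h : HasDerivAt A B l) : B ∈ W :=
  hW.mem_of_tendsto h.tendsto_slope <| .of_forall fun l' =>
    W.smul_mem _ (W.sub_mem (hA l') (hA l))

theorem abs_sub_sub_mul_le_of_lipschitzWith {F F' : ℝ → ℝ} {K : ℝ≥0}
    (hF : ∀ x, HasDerivAt F (F' x) x) (hF' : LipschitzWith K F') (s u : ℝ) :
    |F (s + u) - F s - u * F' s| ≤ K * u ^ 2 := by
  have hG : ∀ v, HasDerivAt (fun v => F (s + v) - v * F' s) (F' (s + v) - F' s) v := fun v =>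
    ((hF (s + v)).comp_const_add s v).sub (hasDerivAt_mul_const (F' s))
  have hbound : ∀ v ∈ uIcc 0 u, ‖F' (s + v) - F' s‖ ≤ K * |u| := fun v hv => by
    calc ‖F' (s + v) - F' s‖ ≤ K * ‖s + v - s‖ := hF'.norm_sub_le _ _
      _ ≤ K * |u| := by
        gcongr
        simpa using abs_sub_left_of_mem_uIcc hv
  have := (convex_uIcc 0 u).norm_image_sub_le_of_norm_hasDerivWithin_le
    (fun v _ => (hG v).hasDerivWithinAt) hbound left_mem_uIcc right_mem_uIcc
  simpa [Real.norm_eq_abs, sq, mul_assoc, sub_right_comm] using this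

theorem exists_ne_of_hasDerivAt_of_bounded {F F' : ℝ → ℝ} (hF : ∀ x, HasDerivAt F (F' x) x)
    (hbdd : ∃ M, ∀ x, |F x| ≤ M) (hnc : ∃ x y, F x ≠ F y) : ∃ x y, F' x ≠ F' y := by
  by_contra! hconst
  obtain ⟨M, hM⟩ := hbdd
  have haffine : ∀ x, F x = F 0 + F' 0 * x := fun x => by
    have hG : ∀ x, HasDerivAt (fun x => F x - x * F' 0) 0 x := fun x =>
      ((hF x).sub (hasDerivAt_mul_const _)).congr_deriv (by rw [hconst x 0, sub_self])
    have := is_const_of_deriv_eq_zero (fun x => (hG x).differentiableAt) (fun x => (hG x).deriv) x 0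
    simp only [zero_mul, sub_zero] at this
    linarith
  obtain ⟨x, y, hxy⟩ := hnc
  have hslope : F' 0 = 0 := by
    by_contra hc
    have h₁ := abs_le.1 (hM ((2 * M + 1) / F' 0))
    have h₀ := abs_le.1 (hM 0)
    rw [haffine, mul_div_cancel₀ _ hc] at h₁
    linarith
  exact hxy (by rw [haffine x, haffine y, hslope, zero_mul, zero_mul])

theorem abs_convolution_le {ψ g : ℝ → ℝ} (hψ : Integrable ψ) {M : ℝ} (hg : ∀ t, |g t| ≤ M)
    (x : ℝ) : |(ψ ⋆[lsmul ℝ ℝ] g) x| ≤ (∫ t, |ψ t|) * M := by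
  rw [convolution_def, ← integral_mul_const, ← Real.norm_eq_abs]
  refine norm_integral_le_of_norm_le (hψ.abs.mul_const M) (.of_forall fun t => ?_)
  simpa [abs_mul] using mul_le_mul_of_nonneg_left (hg (x - t)) (abs_nonneg (ψ t))

theorem ContDiffBump.exists_convolution_ne {g : ℝ → ℝ} (hg : Continuous g) {t₁ t₂ : ℝ}
    (h : g t₁ ≠ g t₂) : ∃ ψ : ContDiffBump (0 : ℝ),
      (ψ.normed volume ⋆[lsmul ℝ ℝ] g) t₁ ≠ (ψ.normed volume ⋆[lsmul ℝ ℝ] g) t₂ := by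
  let ψ : ℕ → ContDiffBump (0 : ℝ) := fun n =>
    ⟨1 / (n + 2), 1 / (n + 1), by positivity, by gcongr; linarith⟩
  have hψ : Tendsto (fun n => (ψ n).rOut) atTop (𝓝 0) := tendsto_one_div_add_atTop_nhds_zero_nat
  have hlim := (convolution_tendsto_right_of_continuous (μ := volume) hψ hg t₁).prodMk_nhds
    (convolution_tendsto_right_of_continuous (μ := volume) hψ hg t₂)
  obtain ⟨n, hn⟩ :=
    (hlim.eventually ((isOpen_ne_fun continuous_fst continuous_snd).mem_nhds h)).exists
  exact ⟨ψ n, hn⟩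

theorem continuous_fwdDiffIter {σ : ℝ → ℝ} (hσ : Continuous σ) (θ : ℝ) (k : ℕ) :
    Continuous (fwdDiffIter θ k σ) := by
  induction k with
  | zero => exact hσ
  | succ k ih => exact (ih.comp (continuous_add_const θ)).sub ih

namespace CCUniversality

variable {X : Type*} [TopologicalSpace X]

/-- The neuron `x ↦ F (l * φ x - b)` is `ridge F (l • φ) b`. -/
def ridge (F : C(ℝ, ℝ)) (φ : C(X, ℝ)) (b : ℝ) : C(X, ℝ) := F.comp (φ - .const X b)

@[simp] theorem ridge_apply (F : C(ℝ, ℝ)) (φ : C(X, ℝ)) (b : ℝ) (x : X) :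
    ridge F φ b x = F (φ x - b) := rfl

theorem ridge_fwdDiffIter_mem {V : Submodule ℝ C(X, ℝ)} {φ : C(X, ℝ)} {σ : ℝ → ℝ}
    (hσ : Continuous σ) (hV : ∀ b, ridge ⟨σ, hσ⟩ φ b ∈ V) (θ : ℝ) (k : ℕ) (b : ℝ) :
    ridge ⟨fwdDiffIter θ k σ, continuous_fwdDiffIter hσ θ k⟩ φ b ∈ V := by
  induction k generalizing b with
  | zero => exact hV b
  | succ k ih =>
    convert V.sub_mem (ih (b - θ)) (ih b) using 1
    ext x
    simp [fwdDiffIter, sub_add]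

theorem hasDerivAt_ridge_smul [CompactSpace X] {F F' : C(ℝ, ℝ)} {K : ℝ≥0}
    (hF : ∀ t, HasDerivAt F (F' t) t) (hF' : LipschitzWith K F') (φ : C(X, ℝ)) (b l : ℝ) :
    HasDerivAt (fun l => ridge F (l • φ) b) (φ * ridge F' (l • φ) b) l := by
  rw [hasDerivAt_iff_isLittleO]
  refine Asymptotics.IsBigO.trans_isLittleO (.of_bound (K * ‖φ‖ ^ 2) (.of_forall fun l' => ?_))
    (Asymptotics.isLittleO_pow_sub_sub l one_lt_two)
  rw [ContinuousMap.norm_le _ (by positivity)]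
  intro x
  have htaylor := abs_sub_sub_mul_le_of_lipschitzWith hF hF' (l * φ x - b) ((l' - l) * φ x)
  have hφx : φ x ^ 2 ≤ ‖φ‖ ^ 2 := by
    simpa [sq_abs] using pow_le_pow_left₀ (abs_nonneg _) (φ.norm_coe_le_norm x) 2
  simp only [ContinuousMap.sub_apply, ContinuousMap.smul_apply, ContinuousMap.mul_apply,
    ridge_apply, smul_eq_mul, Real.norm_eq_abs, abs_pow, sq_abs]
  calc |F (l' * φ x - b) - F (l * φ x - b) - (l' - l) * (φ x * F' (l * φ x - b))|
      = |F (l * φ x - b + (l' - l) * φ x) - F (l * φ x - b)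
          - (l' - l) * φ x * F' (l * φ x - b)| := by ring_nf
    _ ≤ K * ((l' - l) * φ x) ^ 2 := htaylor
    _ ≤ K * ‖φ‖ ^ 2 * (l' - l) ^ 2 := by
        rw [mul_pow, mul_assoc, mul_comm ((l' - l) ^ 2)]
        gcongr

variable [CompactSpace X] {W : Submodule ℝ C(X, ℝ)}

theorem ridge_convolution_mem (hW : IsClosed (W : Set C(X, ℝ))) {φ : C(X, ℝ)} {g : C(ℝ, ℝ)}
    (hg : ∀ b, ridge g φ b ∈ W) {ψ : ℝ → ℝ} (hψ : Continuous ψ) (hψc : HasCompactSupport ψ)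
    {H : C(ℝ, ℝ)} (hH : ⇑H = ψ ⋆[lsmul ℝ ℝ] g) (b : ℝ) : ridge H φ b ∈ W := by
  set F : ℝ → C(X, ℝ) := fun u => ψ u • ridge g φ (b + u)
  have hF : Integrable F := by
    refine Continuous.integrable_of_hasCompactSupport (hψ.smul ?_) hψc.smul_right
    refine ContinuousMap.continuous_of_continuous_uncurry _ ?_
    simp only [Function.uncurry_def, ridge_apply]
    fun_prop
  have : ridge H φ b = ∫ u, F u := by
    ext x
    simp [ContinuousMap.integral_apply hF, hH, convolution_def, F, sub_add_eq_sub_sub]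
  rw [this]
  exact Submodule.integral_mem_of_isClosed hW fun u => W.smul_mem _ (hg _)

/-- Differentiating `φ ^ n * H n (l * φ - b)` in `l` gives `φ ^ (n + 1) * H (n + 1) (l * φ - b)`;
at `l = 0` and a point `-b` where `H n` does not vanish this is a multiple of `φ ^ n`. -/
theorem pow_mem_of_hasDerivAt_family (hW : IsClosed (W : Set C(X, ℝ))) (φ : C(X, ℝ))
    (H : ℕ → C(ℝ, ℝ)) (hder : ∀ n t, HasDerivAt (H n) (H (n + 1) t) t)
    (hbdd : ∀ n, ∃ M, ∀ t, |H n t| ≤ M) (hnc : ∃ t₁ t₂, H 0 t₁ ≠ H 0 t₂)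
    (hH : ∀ (l : ℝ) b, ridge (H 0) (l • φ) b ∈ W) (n : ℕ) : φ ^ n ∈ W := by
  have hlip : ∀ n, ∃ K, LipschitzWith K (H (n + 1)) := fun n => by
    obtain ⟨M, hM⟩ := hbdd (n + 2)
    refine ⟨M.toNNReal, lipschitzWith_of_nnnorm_deriv_le (fun t => (hder _ t).differentiableAt)
      fun t => ?_⟩
    rw [(hder _ t).deriv, ← NNReal.coe_le_coe, coe_nnnorm, Real.coe_toNNReal']
    exact (hM t).trans (le_max_left _ _)
  have hmul : ∀ n (l : ℝ) b, φ ^ n * ridge (H n) (l • φ) b ∈ W := by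
    intro n
    induction n with
    | zero => simpa using hH
    | succ n ih =>
      intro l b
      obtain ⟨K, hK⟩ := hlip n
      rw [pow_succ, mul_assoc]
      exact Submodule.mem_of_hasDerivAt hW (fun l' => ih l' b)
        ((hasDerivAt_ridge_smul (hder n) hK φ b l).const_mul (φ ^ n))
  have hnc' : ∀ n, ∃ t₁ t₂, H n t₁ ≠ H n t₂ := fun n => by
    induction n with
    | zero => exact hnc
    | succ n ih => exact exists_ne_of_hasDerivAt_of_bounded (hder n) (hbdd n) ih
  obtain ⟨t, ht⟩ : ∃ t, H n t ≠ 0 := by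
    obtain ⟨t₁, t₂, h⟩ := hnc' n
    by_contra! h0
    exact h (by rw [h0, h0])
  convert W.smul_mem (H n t)⁻¹ (hmul n 0 (-t)) using 1
  ext x
  simp only [ContinuousMap.smul_apply, ContinuousMap.mul_apply, ContinuousMap.pow_apply,
    ridge_apply, zero_smul, ContinuousMap.zero_apply, zero_sub, neg_neg, smul_eq_mul]
  field_simp

theorem pow_mem_of_forall_ridge_mem (hW : IsClosed (W : Set C(X, ℝ))) (φ : C(X, ℝ))
    {g : C(ℝ, ℝ)} (hbdd : ∃ M, ∀ t, |g t| ≤ M) (hnc : ∃ t₁ t₂, g t₁ ≠ g t₂)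
    (hg : ∀ (l : ℝ) b, ridge g (l • φ) b ∈ W) (n : ℕ) : φ ^ n ∈ W := by
  obtain ⟨t₁, t₂, hne⟩ := hnc
  obtain ⟨ψ, hψ⟩ := ContDiffBump.exists_convolution_ne g.continuous hne
  obtain ⟨M, hM⟩ := hbdd
  set D : ℕ → ℝ → ℝ := fun n => deriv^[n] (ψ.normed volume)
  have hD : ∀ n, ContDiff ℝ ∞ (D n) ∧ HasCompactSupport (D n) := fun n => by
    refine ⟨ψ.contDiff_normed.iterate_deriv n, ?_⟩
    induction n with
    | zero => exact ψ.hasCompactSupport_normed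
    | succ n ih => simpa only [D, Function.iterate_succ_apply'] using ih.deriv
  let H : ℕ → C(ℝ, ℝ) := fun n => ⟨D n ⋆[lsmul ℝ ℝ] g,
    (hD n).2.continuous_convolution_left _ (hD n).1.continuous g.continuous.locallyIntegrable⟩
  refine pow_mem_of_hasDerivAt_family hW φ H (fun n t => ?_)
    (fun n => ⟨_, abs_convolution_le ((hD n).1.continuous.integrable_of_hasCompactSupport
      (hD n).2) hM⟩) ⟨t₁, t₂, hψ⟩
    (fun l b => ridge_convolution_mem hW (hg l) (hD 0).1.continuous (hD 0).2 rfl b) n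
  have := (hD n).2.hasDerivAt_convolution_left (lsmul ℝ ℝ) ((hD n).1.of_le (by norm_cast))
    (g.continuous.locallyIntegrable (μ := volume)) t
  rw [← Function.iterate_succ_apply' deriv] at this
  exact this

theorem comp_mem_of_forall_pow_mem (hW : IsClosed (W : Set C(X, ℝ))) {φ : C(X, ℝ)}
    (hpow : ∀ n, φ ^ n ∈ W) (h : C(ℝ, ℝ)) : h.comp φ ∈ W := by
  refine hW.closure_subset (Metric.mem_closure_iff.2 fun ε hε => ?_)
  obtain ⟨p, hp⟩ := exists_polynomial_near_of_continuousOn (-‖φ‖) ‖φ‖ h h.continuous.continuousOn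
    (ε / 2) (half_pos hε)
  refine ⟨Polynomial.aeval φ p, ?_, ?_⟩
  · rw [Polynomial.aeval_eq_sum_range]
    exact W.sum_mem fun i _ => W.smul_mem _ (hpow i)
  refine ((ContinuousMap.dist_le (half_pos hε).le).2 fun x => ?_).trans_lt (half_lt_self hε)
  rw [Real.dist_eq, abs_sub_comm]
  simpa [Polynomial.aeval_continuousMap_apply] using
    (hp _ (abs_le.1 (φ.norm_coe_le_norm x))).le

variable {E : Type*} [NormedAddCommGroup E] [InnerProductSpace ℝ E] (Z : Set E)

def innerOn (a : E) : C(Z, ℝ) := ⟨fun x => ⟪a, x⟫, by fun_prop⟩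

@[simp] theorem innerOn_apply (a : E) (x : Z) : innerOn Z a x = ⟪a, x⟫ := rfl

theorem smul_innerOn (l : ℝ) (a : E) : l • innerOn Z a = innerOn Z (l • a) := by
  ext x
  simp [real_inner_smul_left]

variable {Z} [CompactSpace Z]

/-- The exponentials `x ↦ exp ⟪a, x⟫` are closed under products, so their span is the algebra
they generate, which separates points. -/
theorem eq_top_of_exp_innerOn_mem {W : Submodule ℝ C(Z, ℝ)} (hW : IsClosed (W : Set C(Z, ℝ)))
    (hexp : ∀ a, (⟨Real.exp, Real.continuous_exp⟩ : C(ℝ, ℝ)).comp (innerOn Z a) ∈ W) :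
    W = ⊤ := by
  let expInner : E → C(Z, ℝ) := fun a =>
    (⟨Real.exp, Real.continuous_exp⟩ : C(ℝ, ℝ)).comp (innerOn Z a)
  let M : Submonoid C(Z, ℝ) :=
    { carrier := range expInner
      mul_mem' := by
        rintro _ _ ⟨a, rfl⟩ ⟨a', rfl⟩
        exact ⟨a + a', by ext x; simp [expInner, inner_add_left, Real.exp_add]⟩
      one_mem' := ⟨0, by ext x; simp [expInner]⟩ }
  let A := Algebra.adjoin ℝ (M : Set C(Z, ℝ))
  have hAW : (A : Set C(Z, ℝ)) ⊆ W := by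
    intro f hf
    change f ∈ Subalgebra.toSubmodule A at hf
    rw [Algebra.adjoin_eq_span, Submonoid.closure_eq] at hf
    exact Submodule.span_le.2 (by rintro _ ⟨a, rfl⟩; exact hexp a) hf
  have hsep : A.SeparatesPoints := by
    intro z w hzw
    refine ⟨_, ⟨expInner (z - w), Algebra.subset_adjoin ⟨z - w, rfl⟩, rfl⟩, ?_⟩
    have hpos : 0 < ‖(z : E) - w‖ ^ 2 := by
      have : (z : E) - w ≠ 0 := sub_ne_zero.2 (Subtype.coe_injective.ne hzw)
      positivity
    rw [← real_inner_self_eq_norm_sq, inner_sub_right] at hpos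
    simpa [expInner] using (Real.exp_lt_exp.2 (sub_pos.1 hpos)).ne'
  have hdense := ContinuousMap.subalgebra_topologicalClosure_eq_top_of_separatesPoints A hsep
  refine eq_top_iff.2 fun f _ => hW.closure_subset_iff.2 hAW ?_
  rw [← Subalgebra.topologicalClosure_coe, hdense]
  trivial

theorem eq_top_of_forall_ridge_innerOn_mem {W : Submodule ℝ C(Z, ℝ)}
    (hW : IsClosed (W : Set C(Z, ℝ))) {g : C(ℝ, ℝ)} (hbdd : ∃ M, ∀ t, |g t| ≤ M)
    (hnc : ∃ t₁ t₂, g t₁ ≠ g t₂) (hg : ∀ a b, ridge g (innerOn Z a) b ∈ W) : W = ⊤ :=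
  eq_top_of_exp_innerOn_mem hW fun a => comp_mem_of_forall_pow_mem hW
    (pow_mem_of_forall_ridge_mem hW (innerOn Z a) hbdd hnc fun l b => by
      rw [smul_innerOn]; exact hg _ b) _

end CCUniversality

open CCUniversality

theorem cc_universality_euclidean_general (σ : ℝ → ℝ) (hσc : Continuous σ)
    (k : ℕ) (θ : ℝ)
    (hbdd : ∃ M : ℝ, ∀ t : ℝ, |fwdDiffIter θ k σ t| ≤ M)
    (hnc : ¬ ∃ c : ℝ, ∀ t : ℝ, fwdDiffIter θ k σ t = c)
    (m : ℕ) (Z : Set (EuclideanSpace ℝ (Fin m))) (hZ : IsCompact Z)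
    (f : EuclideanSpace ℝ (Fin m) → ℝ) (hf : ContinuousOn f Z)
    (ε : ℝ) (hε : 0 < ε) :
    ∃ (n : ℕ) (c : Fin n → ℝ) (a : Fin n → EuclideanSpace ℝ (Fin m)) (b : Fin n → ℝ),
      ∀ x ∈ Z, |f x - ∑ i : Fin n, c i * σ (⟪a i, x⟫ - b i)| < ε := by
  have := isCompact_iff_compactSpace.1 hZ
  set S := Submodule.span ℝ
    (range fun p : EuclideanSpace ℝ (Fin m) × ℝ => ridge ⟨σ, hσc⟩ (innerOn Z p.1) p.2)
  have hS : S.topologicalClosure = ⊤ := by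
    obtain ⟨t, ht⟩ := not_forall.1 fun h => hnc ⟨fwdDiffIter θ k σ 0, h⟩
    exact eq_top_of_forall_ridge_innerOn_mem S.isClosed_topologicalClosure hbdd ⟨t, 0, ht⟩
      fun a b => S.le_topologicalClosure <|
        ridge_fwdDiffIter_mem hσc (fun b => Submodule.subset_span (mem_range_self (a, b))) θ k b
  have hfS : (⟨Z.domRestrict f, hf.domRestrict⟩ : C(Z, ℝ)) ∈ closure (S : Set C(Z, ℝ)) := by
    rw [← S.topologicalClosure_coe, hS]
    trivial
  obtain ⟨G, hGS, hG⟩ := Metric.mem_closure_iff.1 hfS ε hε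
  obtain ⟨n, c, p, rfl⟩ := Submodule.mem_span_set'.1 hGS
  choose ab hab using fun i => (p i).2
  refine ⟨n, c, fun i => (ab i).1, fun i => (ab i).2, fun x hx => ?_⟩
  have := (ContinuousMap.dist_apply_le_dist ⟨x, hx⟩).trans_lt hG
  simpa [← hab, Real.dist_eq, Set.domRestrict_apply] using this

theorem cc_universality_euclidean (σ : ℝ → ℝ) (hσc : Continuous σ)
    (k : ℕ) (θ : ℝ) (hθ : 0 < θ)
    (hbdd : ∃ M : ℝ, ∀ t : ℝ, |fwdDiffIter θ k σ t| ≤ M)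
    (hlip : ∃ L : NNReal, LipschitzWith L (fwdDiffIter θ k σ))
    (hnc : ¬ ∃ c : ℝ, ∀ t : ℝ, fwdDiffIter θ k σ t = c)
    (m : ℕ) (hm : 1 ≤ m) (Z : Set (EuclideanSpace ℝ (Fin m))) (hZ : IsCompact Z)
    (f : EuclideanSpace ℝ (Fin m) → ℝ) (hf : ContinuousOn f Z)
    (ε : ℝ) (hε : 0 < ε) :
    ∃ (n : ℕ) (c : Fin n → ℝ) (a : Fin n → EuclideanSpace ℝ (Fin m)) (b : Fin n → ℝ),
      ∀ x ∈ Z, |f x - ∑ i : Fin n, c i * σ (⟪a i, x⟫ - b i)| < ε :=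
  cc_universality_euclidean_general σ hσc k θ hbdd hnc m Z hZ f hf ε hε
end

section
/- Let g be an invertible m×m real matrix, let k be an orthogonal m×m matrix, let a and λ be diagonal m×m matrices with strictly positive diagonal entries, and let n and ν be upper triangular m×m matrices with all diagonal entries equal to 1. If g⁻¹ = k·a·n (Iwasawa decomposition of g⁻¹) and g·gᵀ = ν·λ·νᵀ (upper Cholesky decomposition of the symmetric positive definite matrix x = g·gᵀ), then a²·λ = I, i.e. λ_{ii} = a_{ii}^{−2} for every i. Consequently the vector-valued composite distance ⟨x, eM⟩ = −log a equals (1/2)·log λ. -/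
open Matrix

private lemma diag_mul_of_tri {m : Type*} [Fintype m] {α : Type*} [LinearOrder α] {f : m → α}
    (hf : Function.Injective f) {A B : Matrix m m ℝ} (hA : A.BlockTriangular f)
    (hB : B.BlockTriangular f) (i : m) : (A * B) i i = A i i * B i i := by
  rw [Matrix.mul_apply]
  apply Finset.sum_eq_single
  · intro j _ hji
    rcases lt_trichotomy (f j) (f i) with h | h | h
    · rw [hA h, zero_mul]
    · exact absurd (hf h) hji
    · rw [hB h, mul_zero]
  · simp

theorem iwasawa_cholesky_composite_distance (m : ℕ)
    (g k a n ν lam : Matrix (Fin m) (Fin m) ℝ)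
    (hg : IsUnit g.det)
    (hk : kᵀ * k = 1)
    (ha : a.IsDiag) (ha' : ∀ i, 0 < a i i)
    (hn : n.BlockTriangular id) (hn' : ∀ i, n i i = 1)
    (hν : ν.BlockTriangular id) (hν' : ∀ i, ν i i = 1)
    (hlam : lam.IsDiag) (hlam' : ∀ i, 0 < lam i i)
    (hIwasawa : g⁻¹ = k * a * n)
    (hCholesky : g * gᵀ = ν * lam * νᵀ) :
    a * a * lam = 1 ∧ (∀ i, lam i i = (a i i) ^ (-2 : ℤ)) ∧
    (∀ i, -Real.log (a i i) = (1 / 2) * Real.log (lam i i)) := by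
  classical
  have hidinj : Function.Injective (id : Fin m → Fin m) := fun _ _ h => h
  have hdinj : Function.Injective (OrderDual.toDual ∘ (id : Fin m → Fin m)) :=
    fun _ _ h => by simpa using h
  -- triangularity facts
  have ha_tri : a.BlockTriangular id := fun i j hij => ha (by simpa using hij.ne')
  have hlam_tri : lam.BlockTriangular id := fun i j hij => hlam (by simpa using hij.ne')
  have haSymm : aᵀ = a := ha.isSymm
  -- determinants
  have hdetn : n.det = 1 := by rw [det_of_upperTriangular hn]; simp [hn']
  have hdetν : ν.det = 1 := by rw [det_of_upperTriangular hν]; simp [hν']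
  have hdeta : a.det = ∏ i, a i i := det_of_upperTriangular ha_tri
  have hdeta' : IsUnit a.det := by
    rw [hdeta]
    exact (Finset.prod_pos (fun i _ => ha' i)).ne'.isUnit
  have hdetnT : IsUnit nᵀ.det := by rw [det_transpose, hdetn]; exact isUnit_one
  have hdetνT : IsUnit νᵀ.det := by rw [det_transpose, hdetν]; exact isUnit_one
  -- rewrite g * gᵀ from the Iwasawa decomposition
  have hkc : ∀ M : Matrix (Fin m) (Fin m) ℝ, kᵀ * (k * M) = M := fun M => by
    rw [← Matrix.mul_assoc, hk, one_mul]
  have hgg : g * gᵀ = (nᵀ * (a * a) * n)⁻¹ := by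
    have hgval : g = (k * a * n)⁻¹ := by
      rw [← Matrix.nonsing_inv_nonsing_inv g hg, hIwasawa]
    have htr : (k * a * n)ᵀ * (k * a * n) = nᵀ * (a * a) * n := by
      simp only [Matrix.transpose_mul, haSymm, Matrix.mul_assoc, hkc]
    rw [hgval, Matrix.transpose_nonsing_inv, ← Matrix.mul_inv_rev, htr]
  have hX : IsUnit (nᵀ * (a * a) * n).det := by
    simp only [Matrix.det_mul, det_transpose, hdetn]
    simpa using hdeta'.mul hdeta'
  -- the key equation
  have h2 : nᵀ * (a * a) * n * (ν * lam * νᵀ) = 1 := by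
    rw [← hCholesky, hgg, Matrix.mul_nonsing_inv _ hX]
  have h3 : nᵀ * (a * a * (n * (ν * lam))) * νᵀ = 1 := by
    simpa only [Matrix.mul_assoc] using h2
  set U : Matrix (Fin m) (Fin m) ℝ := a * a * (n * (ν * lam)) with hU
  have hUval : U = nᵀ⁻¹ * νᵀ⁻¹ := by
    have h4 : U * νᵀ = nᵀ⁻¹ := by
      calc U * νᵀ = nᵀ⁻¹ * (nᵀ * U * νᵀ) := by
            rw [← Matrix.mul_assoc, ← Matrix.mul_assoc, Matrix.nonsing_inv_mul _ hdetnT,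
              Matrix.one_mul]
        _ = nᵀ⁻¹ := by rw [h3, Matrix.mul_one]
    calc U = U * νᵀ * νᵀ⁻¹ := by
          rw [Matrix.mul_assoc, Matrix.mul_nonsing_inv _ hdetνT, Matrix.mul_one]
      _ = nᵀ⁻¹ * νᵀ⁻¹ := by rw [h4]
  -- inverses of the transposes are lower triangular with unit diagonal
  haveI : Invertible nᵀ := nᵀ.invertibleOfIsUnitDet hdetnT
  haveI : Invertible νᵀ := νᵀ.invertibleOfIsUnitDet hdetνT
  have hnT_tri : nᵀ.BlockTriangular (OrderDual.toDual ∘ id) := hn.transpose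
  have hνT_tri : νᵀ.BlockTriangular (OrderDual.toDual ∘ id) := hν.transpose
  have hnTinv_tri := blockTriangular_inv_of_blockTriangular hnT_tri
  have hνTinv_tri := blockTriangular_inv_of_blockTriangular hνT_tri
  have hnTinv_diag : ∀ i, nᵀ⁻¹ i i = 1 := by
    intro i
    have h1 : (nᵀ * nᵀ⁻¹) i i = nᵀ i i * nᵀ⁻¹ i i :=
      diag_mul_of_tri hdinj hnT_tri hnTinv_tri i
    rw [Matrix.mul_nonsing_inv _ hdetnT] at h1
    simpa [Matrix.transpose_apply, hn' i, Matrix.one_apply] using h1.symm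
  have hνTinv_diag : ∀ i, νᵀ⁻¹ i i = 1 := by
    intro i
    have h1 : (νᵀ * νᵀ⁻¹) i i = νᵀ i i * νᵀ⁻¹ i i :=
      diag_mul_of_tri hdinj hνT_tri hνTinv_tri i
    rw [Matrix.mul_nonsing_inv _ hdetνT] at h1
    simpa [Matrix.transpose_apply, hν' i, Matrix.one_apply] using h1.symm
  -- diagonal entries of U, two ways
  have hUdiag_one : ∀ i, U i i = 1 := by
    intro i
    rw [hUval, diag_mul_of_tri hdinj hnTinv_tri hνTinv_tri, hnTinv_diag, hνTinv_diag, one_mul]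
  have key : ∀ i, a i i * a i i * lam i i = 1 := by
    intro i
    have e1 : U i i = a i i * ((a * (n * (ν * lam))) i i) := by
      rw [hU, Matrix.mul_assoc]
      exact diag_mul_of_tri hidinj ha_tri (ha_tri.mul (hn.mul (hν.mul hlam_tri))) i
    have e2 : (a * (n * (ν * lam))) i i = a i i * ((n * (ν * lam)) i i) :=
      diag_mul_of_tri hidinj ha_tri (hn.mul (hν.mul hlam_tri)) i
    have e3 : (n * (ν * lam)) i i = n i i * ((ν * lam) i i) :=
      diag_mul_of_tri hidinj hn (hν.mul hlam_tri) i
    have e4 : (ν * lam) i i = ν i i * lam i i :=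
      diag_mul_of_tri hidinj hν hlam_tri i
    have := hUdiag_one i
    rw [e1, e2, e3, e4, hn' i, hν' i] at this
    linarith [this]
  have hmain : a * a * lam = 1 := by
    have hd : a * a * lam =
        Matrix.diagonal (fun i => a i i * a i i * lam i i) := by
      conv_lhs => rw [← ha.diagonal_diag, ← hlam.diagonal_diag]
      simp [Matrix.diagonal_mul_diagonal, Matrix.diag, mul_assoc]
    rw [hd]
    have : (fun i => a i i * a i i * lam i i) = fun _ => (1 : ℝ) := funext key
    rw [this, Matrix.diagonal_one]
  refine ⟨hmain, ?_, ?_⟩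
  · intro i
    have hne : a i i ≠ 0 := (ha' i).ne'
    have h5 : lam i i = (a i i * a i i)⁻¹ := by
      field_simp
      linarith [key i]
    have h6 : (a i i) ^ (-2 : ℤ) = (a i i * a i i)⁻¹ := by
      rw [show ((-2 : ℤ) = -((2 : ℕ) : ℤ)) from rfl, _root_.zpow_neg, zpow_natCast, sq]
    rw [h5, h6]
  · intro i
    have hlog : Real.log (lam i i) = -2 * Real.log (a i i) := by
      have h1 : lam i i = (a i i) ^ (-2 : ℤ) := by
        have hne : a i i ≠ 0 := (ha' i).ne'
        have h5 : lam i i = (a i i * a i i)⁻¹ := by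
          field_simp
          linarith [key i]
        have h6 : (a i i) ^ (-2 : ℤ) = (a i i * a i i)⁻¹ := by
          rw [show ((-2 : ℤ) = -((2 : ℕ) : ℤ)) from rfl, _root_.zpow_neg, zpow_natCast, sq]
        rw [h5, h6]
      rw [h1, Real.log_zpow]
      push_cast
      ring
    rw [hlog]
    ring
end

section
/- (Uniqueness of the Iwasawa decomposition of GL(m,ℝ).) Let k₁, k₂ be orthogonal m×m real matrices, a₁, a₂ diagonal m×m matrices with strictly positive diagonal entries, and n₁, n₂ upper triangular m×m matrices with all diagonal entries equal to 1. If k₁·a₁·n₁ = k₂·a₂·n₂, then k₁ = k₂, a₁ = a₂, and n₁ = n₂. -/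
/-!
If `k₁ a₁ n₁ = k₂ a₂ n₂`, then `M = k₂ᵀ k₁` is orthogonal and equals `(a₂ n₂)(a₁ n₁)⁻¹`, hence is upper
triangular with positive diagonal. An orthogonal upper triangular matrix has an upper triangular inverse
`Mᵀ`, so it is diagonal with entries `±1`; positivity forces `M = 1`. Thus `k₁ = k₂` and `a₁ n₁ = a₂ n₂`,
and comparing diagonals of the latter gives `a₁ = a₂`, after which `a₁` cancels.
-/

open Matrix

namespace Matrix

section Triangular

variable {n R : Type*} [Fintype n] [LinearOrder n]

theorem IsUpperTriangular.mul_apply_self [NonUnitalNonAssocSemiring R]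
    {A B : Matrix n n R} (hA : A.IsUpperTriangular) (hB : B.IsUpperTriangular) (i : n) :
    (A * B) i i = A i i * B i i := by
  rw [mul_apply, Finset.sum_eq_single i]
  · intro k _ hki
    rcases lt_or_gt_of_ne hki with hlt | hgt
    · rw [hA hlt, zero_mul]
    · rw [hB hgt, mul_zero]
  · intro hi
    exact absurd (Finset.mem_univ i) hi

variable [DecidableEq n]

theorem IsUpperTriangular.isDiag_of_transpose_mul_self_eq_one [CommRing R]
    {M : Matrix n n R} (hM : M.IsUpperTriangular) (h : Mᵀ * M = 1) : M.IsDiag := by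
  have : Invertible M := invertibleOfLeftInverse _ _ h
  have hMt : Mᵀ.IsUpperTriangular := inv_eq_left_inv h ▸ blockTriangular_inv_of_blockTriangular hM
  intro i j hij
  rcases lt_or_gt_of_ne hij with hlt | hgt
  · exact hMt hlt
  · exact hM hgt

theorem IsUpperTriangular.eq_one_of_transpose_mul_self_eq_one
    [CommRing R] [LinearOrder R] [IsStrictOrderedRing R]
    {M : Matrix n n R} (hM : M.IsUpperTriangular) (h : Mᵀ * M = 1) (hpos : ∀ i, 0 < M i i) :
    M = 1 := by
  have hdiag : diagonal M.diag = M := (hM.isDiag_of_transpose_mul_self_eq_one h).diagonal_diag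
  rw [← hdiag, diagonal_transpose, diagonal_mul_diagonal, ← diagonal_one,
    diagonal_eq_diagonal_iff] at h
  rw [← hdiag, ← diagonal_one, diagonal_eq_diagonal_iff]
  exact fun i => (pow_eq_one_iff_of_nonneg (hpos i).le two_ne_zero).mp ((sq _).trans (h i))

theorem IsUpperTriangular.isUnit_det_of_diag_pos
    [Field R] [LinearOrder R] [IsStrictOrderedRing R]
    {U : Matrix n n R} (hU : U.IsUpperTriangular) (hpos : ∀ i, 0 < U i i) : IsUnit U.det := by
  rw [det_of_isUpperTriangular hU]
  exact (Finset.prod_pos fun i _ => hpos i).ne'.isUnit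

theorem eq_of_orthogonal_mul_eq_orthogonal_mul [Field R] [LinearOrder R] [IsStrictOrderedRing R]
    {k₁ k₂ u₁ u₂ : Matrix n n R} (hk₁ : k₁ᵀ * k₁ = 1) (hk₂ : k₂ᵀ * k₂ = 1)
    (hu₁ : u₁.IsUpperTriangular) (hu₁' : ∀ i, 0 < u₁ i i)
    (hu₂ : u₂.IsUpperTriangular) (hu₂' : ∀ i, 0 < u₂ i i)
    (h : k₁ * u₁ = k₂ * u₂) : k₁ = k₂ ∧ u₁ = u₂ := by
  have hk₂' : k₂ * k₂ᵀ = 1 := mul_eq_one_comm.mp hk₂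
  set M := k₂ᵀ * k₁ with hM
  have hMu : M * u₁ = u₂ := by rw [hM, Matrix.mul_assoc, h, ← Matrix.mul_assoc, hk₂, Matrix.one_mul]
  have hM_orth : Mᵀ * M = 1 := by
    rw [hM, transpose_mul, transpose_transpose, Matrix.mul_assoc, ← Matrix.mul_assoc k₂, hk₂',
      Matrix.one_mul, hk₁]
  have hdet := hu₁.isUnit_det_of_diag_pos hu₁'
  have hM_tri : M.IsUpperTriangular := by
    have : Invertible u₁ := u₁.invertibleOfIsUnitDet hdet
    rw [← mul_nonsing_inv_cancel_right u₁ M hdet, hMu]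
    exact hu₂.mul (blockTriangular_inv_of_blockTriangular hu₁)
  have hM_pos (i : n) : 0 < M i i := by
    have hi := hM_tri.mul_apply_self hu₁ i
    rw [hMu] at hi
    exact pos_of_mul_pos_left (hi ▸ hu₂' i) (hu₁' i).le
  have hM_one : M = 1 := hM_tri.eq_one_of_transpose_mul_self_eq_one hM_orth hM_pos
  refine ⟨?_, by rw [← hMu, hM_one, Matrix.one_mul]⟩
  calc k₁ = k₂ * M := by rw [hM, ← Matrix.mul_assoc, hk₂', Matrix.one_mul]
    _ = k₂ := by rw [hM_one, Matrix.mul_one]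

end Triangular

theorem eq_of_diagonal_mul_eq_diagonal_mul {n R : Type*} [Fintype n] [DecidableEq n]
    [NonAssocSemiring R] [IsLeftCancelMulZero R]
    {d₁ d₂ : n → R} {N₁ N₂ : Matrix n n R} (hd₁ : ∀ i, d₁ i ≠ 0)
    (hN₁ : ∀ i, N₁ i i = 1) (hN₂ : ∀ i, N₂ i i = 1)
    (h : diagonal d₁ * N₁ = diagonal d₂ * N₂) : d₁ = d₂ ∧ N₁ = N₂ := by
  have hentry (i j : n) : d₁ i * N₁ i j = d₂ i * N₂ i j := by
    simpa only [diagonal_mul] using congrFun (congrFun h i) j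
  have hd : d₁ = d₂ := funext fun i => by simpa [hN₁, hN₂] using hentry i i
  refine ⟨hd, ext fun i j => mul_left_cancel₀ (hd₁ i) ?_⟩
  rw [hentry, hd]

end Matrix

theorem iwasawa_decomposition_unique (m : ℕ)
    (k₁ k₂ a₁ a₂ n₁ n₂ : Matrix (Fin m) (Fin m) ℝ)
    (hk₁ : k₁ᵀ * k₁ = 1) (hk₂ : k₂ᵀ * k₂ = 1)
    (ha₁ : a₁.IsDiag) (ha₁' : ∀ i, 0 < a₁ i i)
    (ha₂ : a₂.IsDiag) (ha₂' : ∀ i, 0 < a₂ i i)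
    (hn₁ : n₁.BlockTriangular id) (hn₁' : ∀ i, n₁ i i = 1)
    (hn₂ : n₂.BlockTriangular id) (hn₂' : ∀ i, n₂ i i = 1)
    (h : k₁ * a₁ * n₁ = k₂ * a₂ * n₂) :
    k₁ = k₂ ∧ a₁ = a₂ ∧ n₁ = n₂ := by
  rw [← ha₁.diagonal_diag, ← ha₂.diagonal_diag] at h ⊢
  simp only [Matrix.mul_assoc] at h
  have diag_pos {a n : Matrix (Fin m) (Fin m) ℝ} (ha : ∀ i, 0 < a i i) (hn : ∀ i, n i i = 1) (i) :
      0 < (diagonal a.diag * n) i i := by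
    simpa [diagonal_mul, hn] using ha i
  obtain ⟨hk, hu⟩ := eq_of_orthogonal_mul_eq_orthogonal_mul hk₁ hk₂
    ((blockTriangular_diagonal _).mul hn₁) (diag_pos ha₁' hn₁')
    ((blockTriangular_diagonal _).mul hn₂) (diag_pos ha₂' hn₂') h
  obtain ⟨ha, hn⟩ := eq_of_diagonal_mul_eq_diagonal_mul (fun i => (ha₁' i).ne') hn₁' hn₂' hu
  exact ⟨hk, congrArg diagonal ha, hn⟩
end
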